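/- arXiv:2208.09254 — 2 statements merged into one kernel-verified Lean document; each statement's English description precedes it below -/
import Mathlib

section
/- For every k ≥ 2 and every time horizon T ≥ k that is a multiple of k, there exists an IMAB instance I = (f_1, …, f_k) (each f_i a reward function) such that OPT(I,T) ≥ (k²/2)·RR(I,T); i.e., the competitive ratio of the round-robin algorithm is at least k²/2. Concretely, the instance with f_1(n) = n/T for n ≤ T and f_1(n) = 1 for n > T, and f_i ≡ 0 for all i ≥ 2, witnesses this bound. -/
open scoped Classical

/-- A reward function: bounded in [0,1], nondecreasing, with decreasing marginal returns. -/
def IsRewardFn (f : ℕ → ℝ) : Prop :=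
  (∀ n, 0 ≤ f n) ∧ (∀ n, f n ≤ 1) ∧ Monotone f ∧
    ∀ n, 1 ≤ n → f (n + 1) - f n ≤ f n - f (n - 1)

/-- Cumulative reward from pulling an arm with reward function `f` for `N` pulls. -/
noncomputable def Rew (f : ℕ → ℝ) (N : ℕ) : ℝ := ∑ n ∈ Finset.Icc 1 N, f n

/-- Offline optimum: the best total reward over all allocations of `T` pulls to the `k` arms. -/
noncomputable def OPT {k : ℕ} (f : Fin k → ℕ → ℝ) (T : ℕ) : ℝ :=
  sSup {x : ℝ | ∃ M : Fin k → ℕ, (∑ i, M i) = T ∧ x = ∑ i, Rew (f i) (M i)}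

/-!
Put all `T` pulls on the ramp arm `n ↦ n / T`: this earns `(T + 1) / 2`. Round robin gives it only
`m = T / k` pulls, earning `m (m + 1) / (2T) ≈ T / (2k²)`, and the other arms earn nothing.
-/

noncomputable def ramp (T : ℕ) (n : ℕ) : ℝ := if n ≤ T then (n : ℝ) / T else 1

noncomputable def rampInstance (k T : ℕ) : Fin k → ℕ → ℝ :=
  fun i n => if i.val = 0 then ramp T n else 0

lemma ramp_of_le {T n : ℕ} (h : n ≤ T) : ramp T n = n / T := if_pos h

lemma ramp_le_one (T n : ℕ) : ramp T n ≤ 1 := by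
  unfold ramp
  split_ifs with h
  · exact div_le_one_of_le₀ (by exact_mod_cast h) (Nat.cast_nonneg T)
  · exact le_rfl

lemma ramp_eq_one {T n : ℕ} (hT : T ≤ n) (hn : n ≠ 0) : ramp T n = 1 := by
  unfold ramp
  split_ifs with h
  · rw [← le_antisymm h hT, div_self (by exact_mod_cast hn)]
  · rfl

lemma monotone_ramp (T : ℕ) : Monotone (ramp T) := by
  intro a b hab
  by_cases hb : b ≤ T
  · rw [ramp_of_le hb, ramp_of_le (hab.trans hb)]
    gcongr
  · rw [ramp_eq_one (n := b) (by omega) (by omega)]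
    exact ramp_le_one T a

lemma isRewardFn_ramp (T : ℕ) : IsRewardFn (ramp T) := by
  refine ⟨fun n => by unfold ramp; split_ifs <;> positivity, ramp_le_one T, monotone_ramp T,
    fun n hn => ?_⟩
  rcases lt_or_ge n T with hnT | hTn
  · rw [ramp_of_le (by omega : n + 1 ≤ T), ramp_of_le hnT.le, ramp_of_le (by omega : n - 1 ≤ T),
      Nat.cast_sub hn]
    push_cast
    exact le_of_eq (by ring)
  · rw [ramp_eq_one (n := n + 1) (by omega) (by omega), ramp_eq_one hTn (by omega), sub_self,
      sub_nonneg]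
    exact ramp_le_one T (n - 1)

lemma isRewardFn_zero : IsRewardFn 0 :=
  ⟨fun _ => le_rfl, fun _ => zero_le_one, monotone_const, fun _ _ => by simp⟩

lemma isRewardFn_rampInstance (k T : ℕ) (i : Fin k) : IsRewardFn (rampInstance k T i) := by
  by_cases hi : i.val = 0
  · exact (funext fun n => if_pos hi : rampInstance k T i = ramp T) ▸
      isRewardFn_ramp T
  · exact (funext fun n => if_neg hi : rampInstance k T i = 0) ▸ isRewardFn_zero

lemma rew_zero (f : ℕ → ℝ) : Rew f 0 = 0 := by simp [Rew]

lemma rew_succ (f : ℕ → ℝ) (N : ℕ) : Rew f (N + 1) = Rew f N + f (N + 1) :=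
  Finset.sum_Icc_succ_top (Nat.le_add_left 1 N) f

lemma rew_le (f : ℕ → ℝ) (hf : ∀ n, f n ≤ 1) (N : ℕ) : Rew f N ≤ N := by
  calc Rew f N ≤ ∑ _n ∈ Finset.Icc 1 N, (1 : ℝ) := Finset.sum_le_sum fun n _ => hf n
    _ = N := by simp

lemma rew_ramp {T N : ℕ} (hN : N ≤ T) : Rew (ramp T) N = N * (N + 1) / (2 * T) := by
  induction N with
  | zero => simp [rew_zero]
  | succ N ih =>
    rw [rew_succ, ih (by omega), ramp_of_le hN]
    push_cast
    ring

lemma sum_rew_rampInstance {k : ℕ} (hk : k ≠ 0) (T N : ℕ) :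
    ∑ i, Rew (rampInstance k T i) N = Rew (ramp T) N := by
  rw [Fintype.sum_eq_single ⟨0, Nat.pos_of_ne_zero hk⟩ fun i hi => ?_]
  · rfl
  · have : i.val ≠ 0 := fun h => hi (Fin.ext h)
    simp [rampInstance, this, Rew]

lemma bddAbove_allocations {k : ℕ} (f : Fin k → ℕ → ℝ) (hf : ∀ i n, f i n ≤ 1) (T : ℕ) :
    BddAbove {x : ℝ | ∃ M : Fin k → ℕ, (∑ i, M i) = T ∧ x = ∑ i, Rew (f i) (M i)} := by
  refine ⟨T, ?_⟩
  rintro x ⟨M, hM, rfl⟩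
  calc ∑ i, Rew (f i) (M i) ≤ ∑ i, (M i : ℝ) :=
        Finset.sum_le_sum fun i _ => rew_le (f i) (hf i) (M i)
    _ = T := by rw [← Nat.cast_sum, hM]

lemma rew_le_OPT {k : ℕ} (f : Fin k → ℕ → ℝ) (hf : ∀ i n, f i n ≤ 1) (T : ℕ) (i : Fin k) :
    Rew (f i) T ≤ OPT f T := by
  refine le_csSup (bddAbove_allocations f hf T) ⟨Pi.single i T, by simp, ?_⟩
  rw [Fintype.sum_eq_single i fun j hj => by rw [Pi.single_eq_of_ne hj, rew_zero],
    Pi.single_eq_same]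

lemma sq_mul_mul_succ_le {k m T : ℕ} (h : k * m ≤ T) :
    k ^ 2 * (m * (m + 1)) ≤ 2 * (T * (T + 1)) := by
  rcases Nat.eq_zero_or_pos m with rfl | hm
  · simp
  · have hkT : k ≤ T := le_trans (Nat.le_mul_of_pos_right k hm) h
    calc k ^ 2 * (m * (m + 1)) = (k * m) * (k * m + k) := by ring
      _ ≤ T * (T + T) := Nat.mul_le_mul h (Nat.add_le_add h hkT)
      _ ≤ 2 * (T * (T + 1)) := by nlinarith

theorem round_robin_lower_bound_general (k T : ℕ) (hk : 2 ≤ k) :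
    ∃ f : Fin k → ℕ → ℝ,
      (f = fun i n => if i.val = 0 then (if n ≤ T then (n : ℝ) / T else 1) else 0) ∧
      (∀ i, IsRewardFn (f i)) ∧
      ((k : ℝ) ^ 2 / 2) * (∑ i, Rew (f i) (T / k)) ≤ OPT f T := by
  refine ⟨rampInstance k T, rfl, isRewardFn_rampInstance k T, ?_⟩
  have hOPT := rew_le_OPT _ (fun i => (isRewardFn_rampInstance k T i).2.1) T ⟨0, by omega⟩
  have harith : (k : ℝ) ^ 2 * ((T / k : ℕ) * ((T / k : ℕ) + 1)) ≤ 2 * (T * (T + 1)) := by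
    exact_mod_cast sq_mul_mul_succ_le (Nat.mul_div_le T k)
  calc (k : ℝ) ^ 2 / 2 * ∑ i, Rew (rampInstance k T i) (T / k)
      = (k : ℝ) ^ 2 / 2 * ((T / k : ℕ) * ((T / k : ℕ) + 1)) / (2 * T) := by
        rw [sum_rew_rampInstance (by omega), rew_ramp (Nat.div_le_self T k), mul_div_assoc']
    _ ≤ (T : ℝ) * (T + 1) / (2 * T) :=
        div_le_div_of_nonneg_right (by linarith) (by positivity)
    _ = Rew (ramp T) T := (rew_ramp le_rfl).symm
    _ ≤ OPT (rampInstance k T) T := hOPT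

/-- The competitive ratio of the round-robin algorithm is at least `k² / 2`: the concrete
instance with `f₁ n = n / T` for `n ≤ T` (and `1` afterwards) and all other arms
identically `0` witnesses `OPT(I,T) ≥ (k²/2) · RR(I,T)`. -/
theorem round_robin_lower_bound (k T : ℕ) (hk : 2 ≤ k) (hT : k ≤ T) (hdvd : k ∣ T) :
    ∃ f : Fin k → ℕ → ℝ,
      (f = fun i n => if i.val = 0 then (if n ≤ T then (n : ℝ) / T else 1) else 0) ∧
      (∀ i, IsRewardFn (f i)) ∧
      ((k : ℝ) ^ 2 / 2) * (∑ i, Rew (f i) (T / k)) ≤ OPT f T :=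
  round_robin_lower_bound_general k T hk
end

section
/- Run Algorithm 1 indefinitely on an IMAB instance I = (f_1, …, f_k) with k ≥ 2 arms. For each arm i, let a_i = lim_{N→∞} f_i(N) be its true potential (this limit exists since f_i is nondecreasing and bounded). Then for every arm i and every ε with 0 < ε ≤ a_i, there exists T ∈ ℕ such that a_i − f_i(N_i(T)) ≤ ε, where N_i(T) is the number of pulls of arm i made by Algorithm 1 before step T; i.e., every arm reaches arbitrarily close to its true potential given sufficient time. -/
open scoped Classical

/-- The arm pulled by Algorithm 1 (Horizon-Unaware Improving Bandits) at (0-indexed) step `t`,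
given the current pull counts `N`.  During the first `2 * k` steps each arm is pulled twice,
in round-robin order; afterwards the algorithm pulls an arm maximizing the optimistic estimate
`p i`, breaking ties in favor of the smallest count `N i` and then the smallest index. -/
noncomputable def alg1Pull {k : ℕ} [NeZero k] (f : Fin k → ℕ → ℝ)
    (N : Fin k → ℕ) (t : ℕ) : Fin k :=
  if t < 2 * k then ⟨t % k, Nat.mod_lt t (NeZero.pos k)⟩
  else
    let Nstar := Finset.univ.sup N
    let p : Fin k → ℝ := fun i =>
      Rew (f i) (N i) + ∑ n ∈ Finset.Icc 1 (Nstar - N i),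
        (f i (N i) + (n : ℝ) * (f i (N i) - f i (N i - 1)))
    ((Finset.univ.filter fun i : Fin k =>
        (∀ j, p j ≤ p i) ∧ ∀ j, (∀ l, p l ≤ p j) → N i ≤ N j).min).getD
      ⟨0, NeZero.pos k⟩

/-- `alg1Counts f t i` is the number of pulls of arm `i` made by Algorithm 1
during the first `t` steps on the instance `f`. -/
noncomputable def alg1Counts {k : ℕ} [NeZero k] (f : Fin k → ℕ → ℝ) : ℕ → Fin k → ℕ
  | 0 => fun _ => 0
  | t + 1 => fun i =>
      alg1Counts f t i + if alg1Pull f (alg1Counts f t) t = i then 1 else 0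

/-! ### Auxiliary lemmas about reward functions -/

lemma d_nonneg {f : ℕ → ℝ} (hf : IsRewardFn f) (n : ℕ) : 0 ≤ f n - f (n-1) :=
  sub_nonneg.2 (hf.2.2.1 (Nat.sub_le n 1))

lemma d_antitone {f : ℕ → ℝ} (hf : IsRewardFn f) {m n : ℕ} (hm : 1 ≤ m) (hmn : m ≤ n) :
    f n - f (n-1) ≤ f m - f (m-1) := by
  induction n, hmn using Nat.le_induction with
  | base => exact le_rfl
  | succ n hn ih =>
    have h := hf.2.2.2 n (le_trans hm hn)
    simp only [Nat.add_sub_cancel] at h ⊢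
    exact le_trans h ih

lemma sum_d (f : ℕ → ℝ) (n : ℕ) :
    ∑ m ∈ Finset.Icc 1 n, (f m - f (m-1)) = f n - f 0 := by
  induction n with
  | zero => simp
  | succ n ih =>
    rw [Finset.sum_Icc_succ_top (by omega), ih]
    simp

lemma d_le_inv {f : ℕ → ℝ} (hf : IsRewardFn f) {n : ℕ} (hn : 1 ≤ n) :
    (n : ℝ) * (f n - f (n-1)) ≤ 1 := by
  have h1 : (n : ℝ) * (f n - f (n-1)) ≤ ∑ m ∈ Finset.Icc 1 n, (f m - f (m-1)) := by
    have := Finset.card_nsmul_le_sum (Finset.Icc 1 n) (fun m => f m - f (m-1))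
      (f n - f (n-1)) (fun m hm => by
        rw [Finset.mem_Icc] at hm; exact d_antitone hf hm.1 hm.2)
    simpa [Nat.card_Icc, nsmul_eq_mul] using this
  rw [sum_d] at h1
  have := hf.1 0; have := hf.2.1 n; linarith

lemma const_of_d_zero {f : ℕ → ℝ} (hf : IsRewardFn f) {N : ℕ} (hN : 1 ≤ N)
    (h : f N - f (N-1) ≤ 0) {m : ℕ} (hm : N ≤ m) : f m = f N := by
  induction m, hm using Nat.le_induction with
  | base => rfl
  | succ m hm ih =>
    have h1 := d_antitone hf hN (le_trans hm (Nat.le_succ m))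
    simp only [Nat.succ_sub_one, Nat.add_sub_cancel] at h1
    have h2 : 0 ≤ f (m+1) - f m := by
      have := hf.2.2.1 (Nat.le_succ m); linarith
    have : f (m+1) = f m := by linarith
    rw [this, ih]

lemma Rew_nonneg {f : ℕ → ℝ} (hf : IsRewardFn f) (N : ℕ) : 0 ≤ Rew f N :=
  Finset.sum_nonneg fun n _ => hf.1 n

lemma Rew_le {f : ℕ → ℝ} (hf : IsRewardFn f) (N : ℕ) : Rew f N ≤ N := by
  calc Rew f N ≤ ∑ _n ∈ Finset.Icc 1 N, (1:ℝ) := Finset.sum_le_sum fun n _ => hf.2.1 n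
  _ = N := by simp

lemma sum_Icc_id (m : ℕ) : ∑ n ∈ Finset.Icc 1 m, (n:ℝ) = m*(m+1)/2 := by
  induction m with
  | zero => simp
  | succ m ih =>
    rw [Finset.sum_Icc_succ_top (by omega)]
    push_cast; rw [ih]; ring

/-- gauss bound -/
lemma cast_gauss_le (m : ℕ) : (m:ℝ) * ((m:ℝ)+1)/2 ≤ (m:ℝ)^2 := by
  rcases Nat.eq_zero_or_pos m with h | h
  · subst h; norm_num
  · have h1 : (1:ℝ) ≤ (m:ℝ) := by exact_mod_cast h
    nlinarith

/-! ### Auxiliary lemmas about the algorithm -/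

/-- The optimistic estimate used by Algorithm 1, as a standalone function. -/
noncomputable def pEst {k : ℕ} [NeZero k] (f : Fin k → ℕ → ℝ) (N : Fin k → ℕ) (i : Fin k) : ℝ :=
  Rew (f i) (N i) + ∑ n ∈ Finset.Icc 1 (Finset.univ.sup N - N i),
    (f i (N i) + (n : ℝ) * (f i (N i) - f i (N i - 1)))

lemma pEst_eq {k : ℕ} [NeZero k] (f : Fin k → ℕ → ℝ) (N : Fin k → ℕ) (i : Fin k) :
    pEst f N i = Rew (f i) (N i) + ((Finset.univ.sup N - N i : ℕ):ℝ) * f i (N i)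
      + (f i (N i) - f i (N i - 1)) *
        (((Finset.univ.sup N - N i : ℕ):ℝ) * (((Finset.univ.sup N - N i : ℕ):ℝ)+1)/2) := by
  rw [pEst, Finset.sum_add_distrib, Finset.sum_const, ← Finset.sum_mul, sum_Icc_id]
  simp [Nat.card_Icc, nsmul_eq_mul]
  ring

lemma pEst_lower {k : ℕ} [NeZero k] (f : Fin k → ℕ → ℝ) (N : Fin k → ℕ) (i : Fin k)
    (hf : IsRewardFn (f i)) :
    (f i (N i) - f i (N i - 1)) * ((Finset.univ.sup N - N i : ℕ):ℝ)^2 / 2 ≤ pEst f N i := by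
  rw [pEst_eq]
  have h1 := Rew_nonneg hf (N i)
  have h2 := hf.1 (N i)
  have h3 := d_nonneg hf (N i)
  have h4 : (0:ℝ) ≤ ((Finset.univ.sup N - N i : ℕ):ℝ) := Nat.cast_nonneg _
  nlinarith

lemma pEst_upper {k : ℕ} [NeZero k] (f : Fin k → ℕ → ℝ) (N : Fin k → ℕ) (i : Fin k)
    (hf : IsRewardFn (f i)) :
    pEst f N i ≤ (N i : ℝ) + ((Finset.univ.sup N - N i : ℕ):ℝ)
      + (f i (N i) - f i (N i - 1)) * ((Finset.univ.sup N - N i : ℕ):ℝ)^2 := by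
  rw [pEst_eq]
  set m : ℝ := ((Finset.univ.sup N - N i : ℕ):ℝ) with hm
  have h1 := Rew_le hf (N i)
  have h2 := hf.2.1 (N i)
  have h3 := d_nonneg hf (N i)
  have h4 : (0:ℝ) ≤ m := Nat.cast_nonneg _
  have h5 : m * (m+1)/2 ≤ m^2 := hm ▸ cast_gauss_le _
  nlinarith [mul_le_mul_of_nonneg_left h5 h3, mul_le_mul_of_nonneg_right h2 h4]

lemma alg1Pull_maximizes {k : ℕ} [NeZero k] (f : Fin k → ℕ → ℝ) (N : Fin k → ℕ)
    {t : ℕ} (ht : 2 * k ≤ t) (l : Fin k) :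
    pEst f N l ≤ pEst f N (alg1Pull f N t) := by
  rw [alg1Pull, if_neg (by omega)]
  show pEst f N l ≤ pEst f N ((Finset.univ.filter fun i : Fin k =>
      (∀ j, pEst f N j ≤ pEst f N i) ∧
        ∀ j, (∀ l, pEst f N l ≤ pEst f N j) → N i ≤ N j).min.getD ⟨0, NeZero.pos k⟩)
  set p : Fin k → ℝ := fun i => pEst f N i with hp
  set S := Finset.univ.filter fun i : Fin k => (∀ j, p j ≤ p i) ∧
      ∀ j, (∀ l, p l ≤ p j) → N i ≤ N j with hS
  have hSne : S.Nonempty := by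
    obtain ⟨i0, -, hi0⟩ := Finset.exists_max_image (Finset.univ : Finset (Fin k)) p
      ⟨⟨0, NeZero.pos k⟩, Finset.mem_univ _⟩
    obtain ⟨i1, hi1m, hi1⟩ := Finset.exists_min_image
      (Finset.univ.filter fun i : Fin k => ∀ j, p j ≤ p i) N
      ⟨i0, Finset.mem_filter.2 ⟨Finset.mem_univ _, fun j => hi0 j (Finset.mem_univ _)⟩⟩
    refine ⟨i1, Finset.mem_filter.2 ⟨Finset.mem_univ _, (Finset.mem_filter.1 hi1m).2,
      fun j hj => hi1 j (Finset.mem_filter.2 ⟨Finset.mem_univ _, hj⟩)⟩⟩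
  obtain ⟨m, hm⟩ := Finset.min_of_nonempty hSne
  have hmem := Finset.mem_of_min hm
  rw [hS, Finset.mem_filter] at hmem
  rw [hm]
  exact hmem.2.1 l

lemma alg1Counts_mono {k : ℕ} [NeZero k] (f : Fin k → ℕ → ℝ) (j : Fin k) :
    Monotone (fun t => alg1Counts f t j) :=
  monotone_nat_of_le_succ fun t => by
    show alg1Counts f t j ≤ alg1Counts f t j + _
    omega

lemma sum_alg1Counts {k : ℕ} [NeZero k] (f : Fin k → ℕ → ℝ) (t : ℕ) :
    ∑ j, alg1Counts f t j = t := by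
  induction t with
  | zero => simp [alg1Counts]
  | succ t ih =>
    show (∑ j, (alg1Counts f t j + if alg1Pull f (alg1Counts f t) t = j then 1 else 0)) = t + 1
    rw [Finset.sum_add_distrib, ih,
      Finset.sum_ite_eq (Finset.univ) (alg1Pull f (alg1Counts f t) t)]
    simp

lemma one_le_alg1Counts {k : ℕ} [NeZero k] (f : Fin k → ℕ → ℝ) (j : Fin k)
    {t : ℕ} (ht : k ≤ t) : 1 ≤ alg1Counts f t j := by
  have h : 1 ≤ alg1Counts f k j := by
    have hstep : alg1Pull f (alg1Counts f j.val) j.val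
        = ⟨j.val % k, Nat.mod_lt _ (NeZero.pos k)⟩ := by
      rw [alg1Pull, if_pos (by omega)]
    have h1 : 1 ≤ alg1Counts f (j.val + 1) j := by
      show 1 ≤ alg1Counts f j.val j + if alg1Pull f (alg1Counts f j.val) j.val = j then 1 else 0
      rw [hstep, if_pos]
      · omega
      · ext; simp [Nat.mod_eq_of_lt j.isLt]
    exact le_trans h1 (alg1Counts_mono f j (by omega))
  exact le_trans h (alg1Counts_mono f j ht)

lemma sup_alg1Counts_le {k : ℕ} [NeZero k] (f : Fin k → ℕ → ℝ) (t : ℕ) :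
    Finset.univ.sup (alg1Counts f t) ≤ t := by
  refine Finset.sup_le fun j _ => ?_
  calc alg1Counts f t j ≤ ∑ l, alg1Counts f t l :=
        Finset.single_le_sum (fun l _ => Nat.zero_le _) (Finset.mem_univ j)
  _ = t := sum_alg1Counts f t

lemma le_mul_sup_alg1Counts {k : ℕ} [NeZero k] (f : Fin k → ℕ → ℝ) (t : ℕ) :
    t ≤ k * Finset.univ.sup (alg1Counts f t) := by
  conv_lhs => rw [← sum_alg1Counts f t]
  calc ∑ l, alg1Counts f t l ≤ ∑ _l : Fin k, Finset.univ.sup (alg1Counts f t) :=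
        Finset.sum_le_sum fun l _ => Finset.le_sup (Finset.mem_univ l)
  _ = k * Finset.univ.sup (alg1Counts f t) := by simp [Finset.sum_const, mul_comm]

set_option maxHeartbeats 2000000 in
/-- The key real-arithmetic step: at a step where the pulled arm `j` beats arm `i`'s
optimistic estimate, the count `C` of arm `j` must be small. -/
lemma arith_key (K X C tR Nr D dj : ℝ)
    (h1 : D * (X - Nr)^2 / 2 ≤ C + (X - C) + dj * (X - C)^2)
    (h2 : C * dj ≤ 1) (h3 : 0 ≤ dj) (h4 : 1 ≤ C) (h5 : tR ≤ K * X) (h6 : X ≤ tR)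
    (h7 : 2 * K * Nr ≤ tR) (h8 : 16 * K^2 ≤ D * tR) (h9 : 0 < D) (h10 : 2 ≤ K)
    (h11 : 1 ≤ Nr) (h12 : 0 ≤ X - C) (h13 : 0 < tR) : D * C ≤ 16 * K^2 := by
  have hK0 : (0:ℝ) < K := by linarith
  have hX0 : (0:ℝ) ≤ X := by nlinarith
  have hC0 : (0:ℝ) ≤ C := by linarith
  have ha1 : tR ≤ 2 * K * (X - Nr) := by nlinarith
  have hXN0 : 0 ≤ X - Nr := by nlinarith
  have ha2 : tR^2 ≤ 4 * K^2 * (X - Nr)^2 := by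
    nlinarith [mul_nonneg (by linarith : (0:ℝ) ≤ 2*K*(X-Nr) - tR)
      (by linarith : (0:ℝ) ≤ 2*K*(X-Nr) + tR)]
  have ha3 : C + (X - C) + dj * (X - C)^2 ≤ X + dj * X^2 := by
    nlinarith [mul_nonneg h3 (mul_nonneg hC0 (by linarith : (0:ℝ) ≤ 2*X - C))]
  have ha4 : D * tR^2 ≤ 8 * K^2 * (X + dj * X^2) := by
    nlinarith [mul_le_mul_of_nonneg_left ha2 h9.le,
      mul_le_mul_of_nonneg_left (h1.trans ha3) (by positivity : (0:ℝ) ≤ 8*K^2)]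
  have ha5 : dj * X^2 ≤ dj * tR^2 := by
    nlinarith [mul_nonneg h3 (mul_nonneg (by linarith : (0:ℝ) ≤ tR - X)
      (by linarith : (0:ℝ) ≤ tR + X))]
  have ha6 : D * tR^2 ≤ 8 * K^2 * tR + 8 * K^2 * (dj * tR^2) := by
    nlinarith [mul_le_mul_of_nonneg_left h6 (by positivity : (0:ℝ) ≤ 8*K^2),
      mul_le_mul_of_nonneg_left ha5 (by positivity : (0:ℝ) ≤ 8*K^2)]
  have ha7 : 16 * K^2 * tR ≤ D * tR^2 := by
    nlinarith [mul_le_mul_of_nonneg_right h8 h13.le]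
  have ha8 : D * tR^2 ≤ (16 * K^2 * dj) * tR^2 := by linarith
  have ha9 : D ≤ 16 * K^2 * dj :=
    le_of_mul_le_mul_right ha8 (by positivity)
  nlinarith [mul_le_mul_of_nonneg_right ha9 hC0,
    mul_le_mul_of_nonneg_left h2 (by positivity : (0:ℝ) ≤ 16*K^2)]

set_option maxHeartbeats 2000000 in
/-- Under Algorithm 1 every arm reaches arbitrarily close to its true potential
`a = lim_{N → ∞} f i N`: for every `0 < ε ≤ a` there is a time `T` with
`a - f i (Nᵢ(T)) ≤ ε`. -/
theorem alg1_reaches_true_potential (k : ℕ) [NeZero k] (hk : 2 ≤ k)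
    (f : Fin k → ℕ → ℝ) (hf : ∀ i, IsRewardFn (f i)) (i : Fin k) (a : ℝ)
    (ha : Filter.Tendsto (fun N => f i N) Filter.atTop (nhds a))
    (ε : ℝ) (hε0 : 0 < ε) (hεa : ε ≤ a) :
    ∃ T : ℕ, a - f i (alg1Counts f T i) ≤ ε := by
  by_contra hcon
  push_neg at hcon
  -- the counts of arm i are bounded
  obtain ⟨M, hM⟩ : ∃ M : ℕ, ∀ n, M ≤ n → a - f i n < ε := by
    obtain ⟨M, hM⟩ := (Metric.tendsto_atTop.1 ha) ε hε0
    exact ⟨M, fun n hn => by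
      have := hM n hn
      rw [Real.dist_eq, abs_lt] at this
      linarith [this.1]⟩
  have hbdd : ∀ T, alg1Counts f T i ≤ M := by
    intro T
    by_contra hT
    exact absurd (hM _ (by omega)) (not_lt.2 (le_of_lt (hcon T)))
  -- the counts of arm i are eventually constant, equal to N
  have hVbdd : BddAbove (Set.range fun T => alg1Counts f T i) :=
    ⟨M, fun x ⟨T, hT⟩ => hT ▸ hbdd T⟩
  set N : ℕ := sSup (Set.range fun T => alg1Counts f T i) with hNdef
  obtain ⟨T0, hT0⟩ : ∃ T0, alg1Counts f T0 i = N :=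
    Nat.sSup_mem (Set.range_nonempty _) hVbdd
  set T1 : ℕ := max T0 (2 * k) with hT1def
  have hconst : ∀ t, T1 ≤ t → alg1Counts f t i = N := by
    intro t ht
    refine le_antisymm (le_csSup hVbdd ⟨t, rfl⟩) ?_
    rw [← hT0]
    exact alg1Counts_mono f i (le_trans (le_max_left _ _) ht)
  have hT12k : 2 * k ≤ T1 := le_max_right _ _
  have hN1 : 1 ≤ N := by
    rw [← hconst T1 le_rfl]
    exact one_le_alg1Counts f i (by omega)
  have hnotpull : ∀ t, T1 ≤ t → alg1Pull f (alg1Counts f t) t ≠ i := by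
    intro t ht hpull
    have h1 : alg1Counts f (t+1) i = alg1Counts f t i + 1 := by
      show alg1Counts f t i + _ = _
      rw [if_pos hpull]
    rw [hconst t ht, hconst (t+1) (by omega)] at h1
    omega
  rcases le_or_gt (f i N - f i (N - 1)) 0 with hΔ | hΔ
  · -- zero marginal: f i is constant from N on, so a = f i N, contradiction
    have haN : a = f i N := by
      have h2 : (fun n : ℕ => f i n) =ᶠ[Filter.atTop] fun _ => f i N :=
        Filter.eventually_atTop.2 ⟨N, fun m hm => const_of_d_zero (hf i) hN1 hΔ hm⟩
      exact tendsto_nhds_unique ha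
        ((tendsto_const_nhds : Filter.Tendsto (fun _ : ℕ => f i N) Filter.atTop _).congr' h2.symm)
    have := hcon T1
    rw [hconst T1 le_rfl, ← haN] at this
    linarith
  · -- positive marginal: arm i would eventually be pulled again, contradiction
    set B : ℕ := ⌈(16 * (k:ℝ)^2) / (f i N - f i (N - 1))⌉₊ with hBdef
    set T2 : ℕ := max T1 (max (2 * k * N) (B + 1)) with hT2def
    have hkey : ∀ t, T2 ≤ t →
        alg1Counts f t (alg1Pull f (alg1Counts f t) t) ≤ B := by
      intro t ht
      have htT1 : T1 ≤ t := le_trans (le_max_left _ _) ht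
      have ht2k : 2 * k ≤ t := le_trans hT12k htT1
      set Nc := alg1Counts f t with hNc
      set j := alg1Pull f Nc t with hj
      set Ns := Finset.univ.sup Nc with hNs
      have hji : j ≠ i := hnotpull t htT1
      have hNci : Nc i = N := hconst t htT1
      have hple : pEst f Nc i ≤ pEst f Nc j := alg1Pull_maximizes f Nc ht2k i
      have hNile : N ≤ Ns := hNci ▸ Finset.le_sup (Finset.mem_univ i)
      have hNjle : Nc j ≤ Ns := Finset.le_sup (Finset.mem_univ j)
      have hNj1 : 1 ≤ Nc j := one_le_alg1Counts f j (by omega)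
      have hcasti : ((Ns - N : ℕ) : ℝ) = (Ns:ℝ) - (N:ℝ) := Nat.cast_sub hNile
      have hcastj : ((Ns - Nc j : ℕ) : ℝ) = (Ns:ℝ) - (Nc j:ℝ) := Nat.cast_sub hNjle
      have hlow := pEst_lower f Nc i (hf i)
      rw [hNci, ← hNs, hcasti] at hlow
      have hup := pEst_upper f Nc j (hf j)
      rw [← hNs, hcastj] at hup
      have h1 : (f i N - f i (N-1)) * ((Ns:ℝ) - (N:ℝ))^2 / 2 ≤
          (Nc j:ℝ) + ((Ns:ℝ) - (Nc j:ℝ)) +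
            (f j (Nc j) - f j (Nc j - 1)) * ((Ns:ℝ) - (Nc j:ℝ))^2 :=
        le_trans hlow (le_trans hple hup)
      have h2 : (Nc j:ℝ) * (f j (Nc j) - f j (Nc j - 1)) ≤ 1 := d_le_inv (hf j) hNj1
      have h3 : 0 ≤ f j (Nc j) - f j (Nc j - 1) := d_nonneg (hf j) (Nc j)
      have h4 : (1:ℝ) ≤ (Nc j:ℝ) := by exact_mod_cast hNj1
      have h5 : (t:ℝ) ≤ (k:ℝ) * (Ns:ℝ) := by
        rw [hNs, hNc]; exact_mod_cast le_mul_sup_alg1Counts f t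
      have h6 : (Ns:ℝ) ≤ (t:ℝ) := by
        rw [hNs, hNc]; exact_mod_cast sup_alg1Counts_le f t
      have h7 : 2 * (k:ℝ) * (N:ℝ) ≤ (t:ℝ) := by
        have h : 2 * k * N ≤ t := le_trans (le_trans (le_max_left _ _) (le_max_right _ _)) ht
        exact_mod_cast h
      have h8 : 16 * (k:ℝ)^2 ≤ (f i N - f i (N-1)) * (t:ℝ) := by
        have hBt : B + 1 ≤ t := le_trans (le_trans (le_max_right _ _) (le_max_right _ _)) ht
        have hceil : (16 * (k:ℝ)^2) / (f i N - f i (N-1)) ≤ (B : ℝ) := Nat.le_ceil _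
        have hBtR : (B : ℝ) ≤ (t:ℝ) := by exact_mod_cast le_trans (Nat.le_succ B) hBt
        have h := (div_le_iff₀ hΔ).1 hceil
        nlinarith [mul_le_mul_of_nonneg_left hBtR hΔ.le]
      have h10 : (2:ℝ) ≤ (k:ℝ) := by exact_mod_cast hk
      have h11 : (1:ℝ) ≤ (N:ℝ) := by exact_mod_cast hN1
      have h12 : (0:ℝ) ≤ (Ns:ℝ) - (Nc j:ℝ) := by
        rw [← hcastj]; exact Nat.cast_nonneg _
      have h13 : (0:ℝ) < (t:ℝ) := by
        have : 0 < t := by omega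
        exact_mod_cast this
      have hfinal := arith_key (k:ℝ) (Ns:ℝ) (Nc j:ℝ) (t:ℝ) (N:ℝ)
        (f i N - f i (N-1)) (f j (Nc j) - f j (Nc j - 1))
        h1 (by linarith [h2]) h3 h4 h5 h6 h7 h8 hΔ h10 h11 h12 h13
      have hCB : (Nc j:ℝ) ≤ (B : ℝ) := by
        refine le_trans ?_ (Nat.le_ceil _)
        rw [le_div_iff₀ hΔ]
        linarith [hfinal]
      exact_mod_cast hCB
    -- all counts stay bounded forever, contradicting that total pulls equal elapsed time
    set Mx : ℕ := max (Finset.univ.sup (alg1Counts f T2)) (B + 1) with hMx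
    have hbound : ∀ s, ∀ j : Fin k, alg1Counts f (T2 + s) j ≤ Mx := by
      intro s
      induction s with
      | zero =>
        intro j
        exact le_trans (Finset.le_sup (Finset.mem_univ j)) (le_max_left _ _)
      | succ s ih =>
        intro j
        show alg1Counts f (T2 + s) j + (if alg1Pull f (alg1Counts f (T2+s)) (T2+s) = j
          then 1 else 0) ≤ Mx
        by_cases hpj : alg1Pull f (alg1Counts f (T2+s)) (T2+s) = j
        · rw [if_pos hpj]
          have hkb := hkey (T2 + s) (by omega)
          rw [hpj] at hkb
          have hB1 : B + 1 ≤ Mx := le_max_right _ _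
          omega
        · rw [if_neg hpj]
          simpa using ih j
    have hfin := sum_alg1Counts f (T2 + (k * Mx + 1))
    have hle : (T2 + (k * Mx + 1) : ℕ) ≤ k * Mx := by
      calc (T2 + (k * Mx + 1) : ℕ) = ∑ j, alg1Counts f (T2 + (k * Mx + 1)) j := hfin.symm
      _ ≤ ∑ _j : Fin k, Mx := Finset.sum_le_sum fun j _ => hbound _ j
      _ = k * Mx := by simp [Finset.sum_const, mul_comm]
    omega
end
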